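/- arXiv:2303.17510 — 8 statements merged into one kernel-verified Lean document; each statement's English description precedes it below -/
import Mathlib

section
/- Inverse of the decomposed padded DFT: with m, p, q positive integers, q ≥ p, and F : Fin (qm) → ℂ the DFT of f : Fin (qm) → ℂ, one has for all t ∈ {0,...,p-1} and s ∈ {0,...,m-1}: f_{tm+s} = (1/(qm)) ∑_{r=0}^{q-1} ζ_q^{-tr} ζ_{qm}^{-sr} ∑_{ℓ=0}^{m-1} ζ_m^{-sℓ} F_{qℓ+r}. -/
open Finset Complex

/-- The primitive root of unity `exp(2πi/N)`. -/
noncomputable def zeta (N : ℕ) : ℂ := Complex.exp (2 * Real.pi * Complex.I / N)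

lemma zeta_reindex (q m : ℕ) (g : ℕ → ℂ) :
    ∑ k ∈ Finset.range (q * m), g k
      = ∑ ℓ ∈ Finset.range m, ∑ r ∈ Finset.range q, g (q * ℓ + r) := by
  induction m with
  | zero => simp
  | succ n ih =>
    rw [Nat.mul_succ, Finset.sum_range_add, ih, Finset.sum_range_succ]

/-- Inverse of the decomposed padded DFT: for `t < p`, `s < m`,
`f_{tm+s} = (1/(qm)) ∑_{r<q} ζ_q^{-tr} ζ_{qm}^{-sr} ∑_{ℓ<m} ζ_m^{-sℓ} F_{qℓ+r}`,
where `F` is the size-`qm` DFT of `f`. -/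
theorem stmt2 (m p q : ℕ) (hm : 0 < m) (hp : 0 < p) (hq : 0 < q) (hpq : p ≤ q)
    (f : ℕ → ℂ) (F : ℕ → ℂ)
    (hF : ∀ k, F k = ∑ j ∈ Finset.range (q * m), zeta (q * m) ^ (k * j) * f j)
    (t s : ℕ) (ht : t < p) (hs : s < m) :
    f (t * m + s) = (1 / (q * m : ℂ)) *
      ∑ r ∈ Finset.range q, zeta q ^ (-(t * r : ℤ)) * zeta (q * m) ^ (-(s * r : ℤ)) *
        ∑ ℓ ∈ Finset.range m, zeta m ^ (-(s * ℓ : ℤ)) * F (q * ℓ + r) := by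
  have hqm : 0 < q * m := Nat.mul_pos hq hm
  have hNC : ((q * m : ℕ) : ℂ) ≠ 0 := Nat.cast_ne_zero.mpr hqm.ne'
  have hζ : IsPrimitiveRoot (zeta (q * m)) (q * m) := by
    simpa [zeta] using Complex.isPrimitiveRoot_exp (q * m) hqm.ne'
  have hζ0 : zeta (q * m) ≠ 0 := Complex.exp_ne_zero _
  have hqC : (q : ℂ) ≠ 0 := Nat.cast_ne_zero.mpr hq.ne'
  have hmC : (m : ℂ) ≠ 0 := Nat.cast_ne_zero.mpr hm.ne'
  -- zeta q = zeta (q*m) ^ m and zeta m = zeta (q*m) ^ q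
  have hzq : zeta q = zeta (q * m) ^ m := by
    rw [zeta, zeta, ← Complex.exp_nat_mul]
    congr 1
    push_cast
    field_simp
  have hzm : zeta m = zeta (q * m) ^ q := by
    rw [zeta, zeta, ← Complex.exp_nat_mul]
    congr 1
    push_cast
    field_simp
  have hN1 : zeta (q * m) ^ ((q * m : ℕ) : ℤ) = 1 := by
    rw [zpow_natCast]; exact hζ.pow_eq_one
  set a := t * m + s with ha
  have haN : a < q * m := by
    calc a < t * m + m := by omega
    _ = (t + 1) * m := by ring
    _ ≤ q * m := Nat.mul_le_mul_right m (by omega)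
  -- exponent collapse
  have key : ∀ r ℓ : ℕ,
      zeta q ^ (-(t * r : ℤ)) * zeta (q * m) ^ (-(s * r : ℤ)) * zeta m ^ (-(s * ℓ : ℤ))
        = zeta (q * m) ^ (-(a * (q * ℓ + r) : ℤ)) := by
    intro r ℓ
    rw [hzq, hzm, ← zpow_natCast (zeta (q * m)) m, ← zpow_natCast (zeta (q * m)) q,
      ← zpow_mul, ← zpow_add₀ hζ0, ← zpow_mul, ← zpow_add₀ hζ0]
    have hexp : (-(a * (q * ℓ + r) : ℤ)) =
        ((m : ℤ) * (-(t * r : ℤ)) + (-(s * r : ℤ)) + (q : ℤ) * (-(s * ℓ : ℤ)))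
          + ((q * m : ℕ) : ℤ) * (-(t * ℓ : ℤ)) := by
      push_cast [ha]
      ring
    rw [hexp]
    conv_rhs => rw [zpow_add₀ hζ0, zpow_mul, hN1, one_zpow]
    rw [mul_one]
  -- inverse DFT
  have inner : ∀ j ∈ Finset.range (q * m),
      (∑ k ∈ Finset.range (q * m), (zeta (q * m) ^ ((j : ℤ) - (a : ℤ))) ^ k) * f j
        = (if j = a then ((q * m : ℕ) : ℂ) * f j else 0) := by
    intro j hj
    simp only [Finset.mem_range] at hj
    by_cases hja : j = a
    · simp [hja]
    · have hw1 : zeta (q * m) ^ ((j : ℤ) - (a : ℤ)) ≠ 1 := by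
        intro h
        have := (hζ.zpow_eq_one_iff_dvd _).mp h
        have h2 : ((j : ℤ) - a) = 0 := by
          rcases this with ⟨c, hc⟩
          by_contra h0
          have : (q * m : ℤ) ≤ |(j : ℤ) - a| := by
            rw [hc]
            have hc0 : c ≠ 0 := by rintro rfl; simp at hc; omega
            calc (q * m : ℤ) = (q * m : ℤ) * 1 := by ring
            _ ≤ (q * m : ℤ) * |c| := by
                have : (1 : ℤ) ≤ |c| := Int.one_le_abs hc0
                exact mul_le_mul_of_nonneg_left this (by positivity)
            _ = |(q * m : ℤ) * c| := by
                rw [abs_mul, abs_of_nonneg (by positivity : (0:ℤ) ≤ (q*m:ℤ))]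
          have hlt : |(j : ℤ) - a| < (q * m : ℤ) := by
            rw [abs_lt]; omega
          omega
        omega
      have hwN : (zeta (q * m) ^ ((j : ℤ) - (a : ℤ))) ^ (q * m) = 1 := by
        rw [← zpow_natCast _ (q * m), ← zpow_mul,
          show ((j : ℤ) - (a : ℤ)) * ((q * m : ℕ) : ℤ)
            = ((q * m : ℕ) : ℤ) * ((j : ℤ) - (a : ℤ)) from mul_comm _ _,
          zpow_mul, hN1, one_zpow]
      rw [geom_sum_eq hw1, hwN]
      simp [hja]
  have invdft : ∑ k ∈ Finset.range (q * m), zeta (q * m) ^ (-(a * k : ℤ)) * F k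
      = ((q * m : ℕ) : ℂ) * f a := by
    calc ∑ k ∈ Finset.range (q * m), zeta (q * m) ^ (-(a * k : ℤ)) * F k
        = ∑ k ∈ Finset.range (q * m), ∑ j ∈ Finset.range (q * m),
            (zeta (q * m) ^ ((j : ℤ) - (a : ℤ))) ^ k * f j := by
          refine Finset.sum_congr rfl fun k _ => ?_
          rw [hF k, Finset.mul_sum]
          refine Finset.sum_congr rfl fun j _ => ?_
          rw [← mul_assoc, ← zpow_natCast (zeta (q * m)) (k * j), ← zpow_add₀ hζ0,
            ← zpow_natCast (zeta (q * m) ^ ((j : ℤ) - (a : ℤ))) k, ← zpow_mul]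
          congr 1
          push_cast
          ring
      _ = ∑ j ∈ Finset.range (q * m),
            (∑ k ∈ Finset.range (q * m), (zeta (q * m) ^ ((j : ℤ) - (a : ℤ))) ^ k) * f j := by
          rw [Finset.sum_comm]
          exact Finset.sum_congr rfl fun j _ => (Finset.sum_mul ..).symm
      _ = ∑ j ∈ Finset.range (q * m), (if j = a then ((q * m : ℕ) : ℂ) * f j else 0) :=
          Finset.sum_congr rfl inner
      _ = ((q * m : ℕ) : ℂ) * f a := by
          rw [Finset.sum_ite_eq' (Finset.range (q * m)) a fun j => ((q * m : ℕ) : ℂ) * f j]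
          simp [haN]
  -- assemble
  have hrhs : ∑ r ∈ Finset.range q, zeta q ^ (-(t * r : ℤ)) * zeta (q * m) ^ (-(s * r : ℤ)) *
        ∑ ℓ ∈ Finset.range m, zeta m ^ (-(s * ℓ : ℤ)) * F (q * ℓ + r)
      = ∑ k ∈ Finset.range (q * m), zeta (q * m) ^ (-(a * k : ℤ)) * F k := by
    rw [zeta_reindex q m fun k => zeta (q * m) ^ (-(a * k : ℤ)) * F k, Finset.sum_comm]
    refine Finset.sum_congr rfl fun r _ => ?_
    rw [Finset.mul_sum]
    refine Finset.sum_congr rfl fun ℓ _ => ?_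
    push_cast
    rw [← key r ℓ]
    ring
  rw [hrhs, invdft]
  push_cast
  field_simp
end

section
/- Residue accumulation for DFT inversion: for q, m ≥ 1, f : Fin (qm) → ℂ with DFT F, define for each r ∈ {0,...,q-1}, s ∈ {0,...,m-1}, t ∈ {0,...,p-1} the quantity h_{r,s,t} = ζ_q^{-tr} ζ_{qm}^{-sr} ∑_{ℓ=0}^{m-1} ζ_m^{-sℓ} F_{qℓ+r}. Then f_{tm+s} = (1/(qm)) ∑_{r=0}^{q-1} h_{r,s,t}. -/
open Finset Complex

lemma reidx (q m : ℕ) (hq : 0 < q) (g : ℕ → ℂ) :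
    ∑ r ∈ range q, ∑ ℓ ∈ range m, g (q * ℓ + r) = ∑ k ∈ range (q * m), g k := by
  rw [← Finset.sum_product']
  apply Finset.sum_nbij' (fun p => q * p.2 + p.1) (fun k => (k % q, k / q))
  · rintro ⟨r, ℓ⟩ hp
    simp only [mem_product, mem_range] at hp ⊢
    calc q * ℓ + r < q * ℓ + q := by omega
    _ = q * (ℓ + 1) := by ring
    _ ≤ q * m := Nat.mul_le_mul_left _ (by omega)
  · intro k hk
    simp only [mem_product, mem_range] at hk ⊢
    exact ⟨Nat.mod_lt _ hq, Nat.div_lt_of_lt_mul (by omega)⟩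
  · rintro ⟨r, ℓ⟩ hp
    simp only [mem_product, mem_range] at hp
    simp [Nat.mul_add_mod, Nat.mul_add_div hq, Nat.mod_eq_of_lt hp.1, Nat.div_eq_of_lt hp.1]
  · intro k hk
    simp [Nat.div_add_mod, Nat.mod_add_div]
  · rintro ⟨r, ℓ⟩ hp; rfl

lemma zeta_mul_pow (q m : ℕ) (hq : 0 < q) (hm : 0 < m) : zeta q = zeta (q * m) ^ m := by
  rw [zeta, zeta, ← Complex.exp_nat_mul]
  congr 1
  have h1 : (q : ℂ) ≠ 0 := Nat.cast_ne_zero.2 hq.ne'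
  have h2 : (m : ℂ) ≠ 0 := Nat.cast_ne_zero.2 hm.ne'
  push_cast
  field_simp

/-- Residue accumulation for DFT inversion: with
`h_{r,s,t} = ζ_q^{-tr} ζ_{qm}^{-sr} ∑_{ℓ<m} ζ_m^{-sℓ} F_{qℓ+r}`, one has
`f_{tm+s} = (1/(qm)) ∑_{r<q} h_{r,s,t}`. -/
theorem stmt3 (m p q : ℕ) (hm : 0 < m) (hp : 0 < p) (hq : 0 < q) (hpq : p ≤ q)
    (f : ℕ → ℂ) (F : ℕ → ℂ)
    (hF : ∀ k, F k = ∑ j ∈ Finset.range (q * m), zeta (q * m) ^ (k * j) * f j)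
    (h : ℕ → ℕ → ℕ → ℂ)
    (hh : ∀ r s t, h r s t = zeta q ^ (-(t * r : ℤ)) * zeta (q * m) ^ (-(s * r : ℤ)) *
        ∑ ℓ ∈ Finset.range m, zeta m ^ (-(s * ℓ : ℤ)) * F (q * ℓ + r))
    (t s : ℕ) (ht : t < p) (hs : s < m) :
    f (t * m + s) = (1 / (q * m : ℂ)) * ∑ r ∈ Finset.range q, h r s t := by
  set n := t * m + s with hn
  have hnN : n < q * m := by
    have ht' : t < q := lt_of_lt_of_le ht hpq
    calc n = t * m + s := rfl
    _ < t * m + m := by omega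
    _ = (t + 1) * m := by ring
    _ ≤ q * m := Nat.mul_le_mul_right _ (by omega)
  set ζ := zeta (q * m) with hζdef
  have hNne : q * m ≠ 0 := by positivity
  have hprim : IsPrimitiveRoot ζ (q * m) := by
    have := Complex.isPrimitiveRoot_exp (q * m) hNne
    simpa [hζdef, zeta] using this
  have hζ0 : ζ ≠ 0 := by rw [hζdef, zeta]; exact Complex.exp_ne_zero _
  have hper : ∀ a b : ℤ, ((q * m : ℕ) : ℤ) ∣ a - b → ζ ^ a = ζ ^ b := by
    intro a b hd
    have h1 : ζ ^ (a - b) = 1 := (hprim.zpow_eq_one_iff_dvd _).2 hd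
    calc ζ ^ a = ζ ^ (b + (a - b)) := by rw [show b + (a - b) = a by ring]
    _ = ζ ^ b * ζ ^ (a - b) := zpow_add₀ hζ0 _ _
    _ = ζ ^ b := by rw [h1, mul_one]
  have e1 : zeta q = ζ ^ m := zeta_mul_pow q m hq hm
  have e2 : zeta m = ζ ^ q := by rw [hζdef, mul_comm q m]; exact zeta_mul_pow m q hm hq
  have key : ∀ r, h r s t = ∑ ℓ ∈ range m, ∑ j ∈ range (q * m),
      ζ ^ (((q * ℓ + r : ℕ) : ℤ) * ((j : ℤ) - (n : ℤ))) * f j := by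
    intro r
    rw [hh]
    simp only [hF]
    rw [Finset.mul_sum]
    refine Finset.sum_congr rfl fun ℓ _ => ?_
    rw [Finset.mul_sum, Finset.mul_sum]
    refine Finset.sum_congr rfl fun j hj => ?_
    rw [e1, e2, ← zpow_natCast ζ m, ← zpow_natCast ζ q, ← zpow_mul, ← zpow_mul,
      ← zpow_natCast ζ ((q * ℓ + r) * j)]
    calc ζ ^ ((m : ℤ) * (-(t * r : ℤ))) * ζ ^ (-(s * r : ℤ)) *
          (ζ ^ ((q : ℤ) * (-(s * ℓ : ℤ))) * (ζ ^ (((q * ℓ + r) * j : ℕ) : ℤ) * f j))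
        = ζ ^ ((m : ℤ) * (-(t * r : ℤ)) + (-(s * r : ℤ)) + (q : ℤ) * (-(s * ℓ : ℤ)) +
            (((q * ℓ + r) * j : ℕ) : ℤ)) * f j := by
          rw [zpow_add₀ hζ0, zpow_add₀ hζ0, zpow_add₀ hζ0]; ring
    _ = ζ ^ (((q * ℓ + r : ℕ) : ℤ) * ((j : ℤ) - (n : ℤ))) * f j := by
          rw [hper _ _ ?_]
          refine ⟨t * ℓ, ?_⟩
          rw [hn]
          push_cast
          ring
  have step : ∑ r ∈ range q, h r s t = ∑ k ∈ range (q * m), ∑ j ∈ range (q * m),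
      ζ ^ ((k : ℤ) * ((j : ℤ) - (n : ℤ))) * f j := by
    simp only [key]
    exact reidx q m hq (fun k => ∑ j ∈ range (q * m), ζ ^ ((k : ℤ) * ((j : ℤ) - (n : ℤ))) * f j)
  have step2 : ∑ k ∈ range (q * m), ∑ j ∈ range (q * m),
      ζ ^ ((k : ℤ) * ((j : ℤ) - (n : ℤ))) * f j
      = ∑ j ∈ range (q * m), (∑ k ∈ range (q * m), (ζ ^ ((j : ℤ) - (n : ℤ))) ^ k) * f j := by
    rw [Finset.sum_comm]
    refine Finset.sum_congr rfl fun j _ => ?_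
    rw [← Finset.sum_mul]
    congr 1
    refine Finset.sum_congr rfl fun k _ => ?_
    rw [mul_comm ((k : ℤ)), zpow_mul, zpow_natCast]
  have step3 : ∑ j ∈ range (q * m), (∑ k ∈ range (q * m), (ζ ^ ((j : ℤ) - (n : ℤ))) ^ k) * f j
      = (q * m : ℕ) * f n := by
    rw [Finset.sum_eq_single n]
    · simp
    · intro j hj hjn
      have hjN : j < q * m := mem_range.1 hj
      have hz1 : ζ ^ ((j : ℤ) - (n : ℤ)) ≠ 1 := by
        intro hcon
        have hd := (hprim.zpow_eq_one_iff_dvd _).1 hcon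
        have h0 : (j : ℤ) - (n : ℤ) = 0 := by
          refine Int.eq_zero_of_abs_lt_dvd hd ?_
          rw [abs_lt]
          constructor <;> [skip; skip] <;> push_cast <;> omega
        have : j = n := by omega
        exact hjn this
      have hzN : (ζ ^ ((j : ℤ) - (n : ℤ))) ^ (q * m) = 1 := by
        rw [← zpow_natCast (ζ ^ ((j : ℤ) - (n : ℤ))), ← zpow_mul, mul_comm, zpow_mul,
          zpow_natCast, hprim.pow_eq_one, one_zpow]
      rw [geom_sum_eq hz1, hzN]
      simp
    · intro hn'
      exact absurd (mem_range.2 hnN) hn'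
  rw [step, step2, step3]
  have hNc : ((q * m : ℕ) : ℂ) ≠ 0 := Nat.cast_ne_zero.2 hNne
  push_cast at hNc ⊢
  field_simp
  rw [mul_assoc, mul_div_cancel_right₀ _ hNc]
end

section
/- Centered padded DFT decomposition: let p be even, m, q positive integers with q ≥ p, and f : {-pm/2,...,pm/2-1} → ℂ. Define F_k = ∑_{j=-pm/2}^{pm/2-1} ζ_{qm}^{kj} f_j for k ∈ {0,...,qm-1}. Then F_{qℓ+r} = ∑_{s=0}^{m-1} ζ_m^{ℓs} w_{r,s}, where w_{r,s} = ζ_{qm}^{rs} ∑_{t=0}^{p/2-1} ζ_q^{rt} ( f_{tm+s} + ζ_{2q}^{-rp} f_{tm+s-pm/2} ). -/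
open Finset Complex

lemma zeta_zpow (N : ℕ) (k : ℤ) :
    zeta N ^ k = Complex.exp (2 * Real.pi * Complex.I * k / N) := by
  rw [zeta, ← Complex.exp_int_mul]
  congr 1
  push_cast
  ring

lemma zeta_pow (N k : ℕ) :
    zeta N ^ k = Complex.exp (2 * Real.pi * Complex.I * k / N) := by
  rw [zeta, ← Complex.exp_nat_mul]
  congr 1
  push_cast
  ring

lemma exp_eq_of {a b : ℂ} (n : ℤ) (h : a = n * (2 * Real.pi * Complex.I) + b) :
    Complex.exp a = Complex.exp b := by
  rw [h, Complex.exp_add, Complex.exp_int_mul_two_pi_mul_I, one_mul]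

lemma sum_Ico_int (a : ℤ) (n : ℕ) (g : ℤ → ℂ) :
    ∑ j ∈ Finset.Ico a (a + n), g j = ∑ i ∈ Finset.range n, g (a + i) := by
  refine Finset.sum_nbij' (fun j => (j - a).toNat) (fun i => a + (i : ℤ)) ?_ ?_ ?_ ?_ ?_ <;>
      intro x hx <;> simp only [Finset.mem_Ico, Finset.mem_range] at hx ⊢
  · omega
  · omega
  · omega
  · omega
  · congr 1
    omega

lemma sum_range_mul_decomp (g : ℕ → ℂ) (a b : ℕ) :
    ∑ i ∈ Finset.range (a * b), g i =
      ∑ t ∈ Finset.range a, ∑ s ∈ Finset.range b, g (t * b + s) := by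
  induction a with
  | zero => simp
  | succ a ih =>
    rw [Finset.sum_range_succ, ← ih, Nat.succ_mul, Finset.sum_range_add]

/-- Centered padded DFT decomposition: for even `p`, `q ≥ p`, and `f` indexed over
`{-pm/2,…,pm/2-1}`, the centered DFT `F_k = ∑_{j=-pm/2}^{pm/2-1} ζ_{qm}^{kj} f_j`
satisfies `F_{qℓ+r} = ∑_{s<m} ζ_m^{ℓs} w_{r,s}` with
`w_{r,s} = ζ_{qm}^{rs} ∑_{t<p/2} ζ_q^{rt} (f_{tm+s} + ζ_{2q}^{-rp} f_{tm+s-pm/2})`. -/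
theorem stmt7 (m p q : ℕ) (hm : 0 < m) (hp : 0 < p) (hpe : p % 2 = 0)
    (hq : 0 < q) (hpq : p ≤ q) (f : ℤ → ℂ)
    (ℓ r : ℕ) (hℓ : ℓ < m) (hr : r < q) :
    ∑ j ∈ Finset.Ico (-(p * m / 2 : ℤ)) ((p * m / 2 : ℤ)),
        zeta (q * m) ^ ((q * ℓ + r : ℤ) * j) * f j =
      ∑ s ∈ Finset.range m, zeta m ^ (ℓ * s) *
        (zeta (q * m) ^ (r * s) *
          ∑ t ∈ Finset.range (p / 2), zeta q ^ (r * t) *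
            (f (t * m + s : ℕ) + zeta (2 * q) ^ (-(r * p : ℤ)) *
              f ((t * m + s : ℤ) - (p * m / 2 : ℤ)))) := by
  have hm' : (m : ℂ) ≠ 0 := Nat.cast_ne_zero.mpr hm.ne'
  have hq' : (q : ℂ) ≠ 0 := Nat.cast_ne_zero.mpr hq.ne'
  obtain ⟨P, rfl⟩ : ∃ P, p = 2 * P := ⟨p / 2, by omega⟩
  have hB : ((2 * P : ℕ) : ℤ) * (m : ℕ) / 2 = ((P : ℤ) * m) := by
    push_cast
    rw [show (2 : ℤ) * (P : ℤ) * (m : ℤ) = ((P : ℤ) * m) * 2 by ring,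
      Int.mul_ediv_cancel _ two_ne_zero]
  have hR : 2 * P / 2 = P := by omega
  rw [hB, hR]
  -- scalar identities
  have key1 : ∀ s t : ℕ,
      zeta (q * m) ^ (((q : ℤ) * ℓ + r) * ((t : ℤ) * m + s)) =
        zeta m ^ (ℓ * s) * (zeta (q * m) ^ (r * s) * zeta q ^ (r * t)) := by
    intro s t
    rw [zeta_zpow, zeta_pow, zeta_pow, zeta_pow, ← Complex.exp_add, ← Complex.exp_add]
    refine exp_eq_of ((ℓ : ℤ) * t) ?_
    push_cast
    field_simp [hm', hq']
    ring
  have key2 : ∀ s t : ℕ,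
      zeta (q * m) ^ (((q : ℤ) * ℓ + r) * ((t : ℤ) * m + s - (P : ℤ) * m)) =
        zeta m ^ (ℓ * s) * (zeta (q * m) ^ (r * s) *
          (zeta q ^ (r * t) * zeta (2 * q) ^ (-((r : ℤ) * (2 * P : ℕ))))) := by
    intro s t
    rw [zeta_zpow, zeta_pow, zeta_pow, zeta_pow, zeta_zpow,
      ← Complex.exp_add, ← Complex.exp_add, ← Complex.exp_add]
    refine exp_eq_of ((ℓ : ℤ) * ((t : ℤ) - (P : ℤ))) ?_
    push_cast
    field_simp
    ring_nf
  -- split LHS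
  have hge : (0 : ℤ) ≤ (P : ℤ) * m := by positivity
  have hle1 : (-(P : ℤ) * m) ≤ 0 := by linarith
  rw [show (-((P : ℤ) * m)) = -(P : ℤ) * m by ring,
    ← Finset.Ico_union_Ico_eq_Ico hle1 hge,
    Finset.sum_union (Finset.Ico_disjoint_Ico_consecutive _ _ _)]
  -- positive part
  have e1 : ∑ j ∈ Finset.Ico (0 : ℤ) ((P : ℤ) * m),
      zeta (q * m) ^ (((q : ℤ) * ℓ + r) * j) * f j =
      ∑ s ∈ Finset.range m, ∑ t ∈ Finset.range P,
        zeta m ^ (ℓ * s) * (zeta (q * m) ^ (r * s) * (zeta q ^ (r * t) * f ((t * m + s : ℕ)))) := by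
    have h0 : ((P : ℤ) * m) = (0 : ℤ) + ((P * m : ℕ) : ℤ) := by push_cast; ring
    rw [h0, sum_Ico_int, sum_range_mul_decomp _ P m, Finset.sum_comm]
    refine Finset.sum_congr rfl fun s hs => Finset.sum_congr rfl fun t ht => ?_
    have : ((0 : ℤ) + ((t * m + s : ℕ) : ℤ)) = ((t : ℤ) * m + s) := by push_cast; ring
    rw [this, key1 s t]
    push_cast
    ring
  -- negative part
  have e2 : ∑ j ∈ Finset.Ico (-(P : ℤ) * m) (0 : ℤ),
      zeta (q * m) ^ (((q : ℤ) * ℓ + r) * j) * f j =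
      ∑ s ∈ Finset.range m, ∑ t ∈ Finset.range P,
        zeta m ^ (ℓ * s) * (zeta (q * m) ^ (r * s) * (zeta q ^ (r * t) *
          (zeta (2 * q) ^ (-((r : ℤ) * (2 * P : ℕ))) * f ((t : ℤ) * m + s - (P : ℤ) * m)))) := by
    have h0 : (0 : ℤ) = (-(P : ℤ) * m) + ((P * m : ℕ) : ℤ) := by push_cast; ring
    rw [h0, sum_Ico_int, sum_range_mul_decomp _ P m, Finset.sum_comm]
    refine Finset.sum_congr rfl fun s hs => Finset.sum_congr rfl fun t ht => ?_
    have : ((-(P : ℤ) * m) + ((t * m + s : ℕ) : ℤ)) = ((t : ℤ) * m + s - (P : ℤ) * m) := by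
      push_cast; ring
    rw [this, key2 s t]
    push_cast
    ring
  rw [e1, e2, ← Finset.sum_add_distrib]
  refine Finset.sum_congr rfl fun s hs => ?_
  rw [Finset.mul_sum, Finset.mul_sum, ← Finset.sum_add_distrib]
  refine Finset.sum_congr rfl fun t ht => ?_
  ring
end

section
/- Hermitian preprocessing symmetry: let p be even, m, q positive with q ≥ p, and f : ℤ → ℂ satisfy f_j = conj(f_{-j}) and vanish for |j| ≥ pm/2 + 1. Define w_{r,s} = ζ_{qm}^{rs} ∑_{t=0}^{p/2-1} ζ_q^{rt} ( f_{tm+s} + ζ_{2q}^{-rp} conj(f_{pm/2 - tm - s}) ) for s ∈ ℤ taken modulo m. Then w_{r,s} = conj(w_{r, m-s}) for all r ∈ {0,...,q-1} and s ∈ {1,...,m-1}. -/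
open Finset Complex

lemma conj_zeta_zpow (N : ℕ) (k : ℤ) :
    starRingEnd ℂ (zeta N ^ k) = Complex.exp (2 * Real.pi * Complex.I * (-k) / N) := by
  rw [zeta_zpow, ← Complex.exp_conj]
  congr 1
  simp [map_div₀, Complex.conj_I, map_ofNat]

lemma conj_zeta_pow (N k : ℕ) :
    starRingEnd ℂ (zeta N ^ k) = Complex.exp (2 * Real.pi * Complex.I * (-(k : ℤ)) / N) := by
  rw [← zpow_natCast, conj_zeta_zpow]

/-- Hermitian preprocessing symmetry: for even `p`, `q ≥ p`, and Hermitian-symmetric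
`f` vanishing for `|j| ≥ pm/2 + 1`, the quantity
`w_{r,s} = ζ_{qm}^{rs} ∑_{t<p/2} ζ_q^{rt} (f_{tm+s} + ζ_{2q}^{-rp} conj(f_{pm/2-tm-s}))`
satisfies `w_{r,s} = conj(w_{r,m-s})` for `r ∈ {0,…,q-1}` and `s ∈ {1,…,m-1}`. -/
theorem stmt9 (m p q : ℕ) (hm : 0 < m) (hp : 0 < p) (hpe : p % 2 = 0)
    (hq : 0 < q) (hpq : p ≤ q) (f : ℤ → ℂ)
    (hherm : ∀ j : ℤ, f j = starRingEnd ℂ (f (-j)))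
    (hsupp : ∀ j : ℤ, (p * m / 2 : ℤ) + 1 ≤ |j| → f j = 0)
    (w : ℕ → ℕ → ℂ)
    (hw : ∀ (r s : ℕ), w r s = zeta (q * m) ^ (r * s) *
      ∑ t ∈ Finset.range (p / 2), zeta q ^ (r * t) *
        (f (t * m + s : ℕ) + zeta (2 * q) ^ (-(r * p : ℤ)) *
          starRingEnd ℂ (f ((p * m / 2 : ℤ) - t * m - s))))
    (r s : ℕ) (hr : r < q) (hs1 : 1 ≤ s) (hs : s < m) :
    w r s = starRingEnd ℂ (w r (m - s)) := by
  have hq0 : (q : ℂ) ≠ 0 := Nat.cast_ne_zero.2 hq.ne'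
  have hm0 : (m : ℂ) ≠ 0 := Nat.cast_ne_zero.2 hm.ne'
  rw [hw r s, hw r (m - s), map_mul, map_sum, Finset.mul_sum, Finset.mul_sum,
    ← Finset.sum_range_reflect]
  refine Finset.sum_congr rfl fun t ht => ?_
  rw [Finset.mem_range] at ht
  obtain ⟨u, hu1, hu2⟩ : ∃ u, p / 2 - 1 - t = u ∧ t + u + 1 = p / 2 := ⟨_, rfl, by omega⟩
  rw [hu1]
  have hpn : p = 2 * (t + u + 1) := by omega
  have hPm : ((p : ℤ) * m / 2) = ((p / 2 : ℕ) : ℤ) * m := by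
    obtain ⟨P, hP⟩ : ∃ P, p = 2 * P := ⟨p / 2, by omega⟩
    subst hP
    push_cast [Nat.mul_div_cancel_left _ two_pos]
    rw [mul_assoc, Int.mul_ediv_cancel_left _ two_ne_zero]
  have hP2 : ((p / 2 : ℕ) : ℤ) = (t : ℤ) + u + 1 := by omega
  have harg1 : ((t * m + (m - s) : ℕ) : ℤ) = (p : ℤ) * m / 2 - (u : ℤ) * m - (s : ℤ) := by
    rw [hPm, hP2]
    push_cast [Nat.cast_sub hs.le]
    ring
  have harg2 : (p : ℤ) * m / 2 - (t : ℤ) * m - ((m - s : ℕ) : ℤ) = ((u * m + s : ℕ) : ℤ) := by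
    rw [hPm, hP2]
    push_cast [Nat.cast_sub hs.le]
    ring
  simp only [map_mul, map_add, RingHom.map_mul, Complex.conj_conj]
  rw [harg1, harg2]
  have hpC : (p : ℂ) = 2 * ((t : ℂ) + u + 1) := by exact_mod_cast hpn
  have key2 : zeta (q * m) ^ (r * s) * zeta q ^ (r * u) * zeta (2 * q) ^ (-(r * p : ℤ)) =
      starRingEnd ℂ (zeta (q * m) ^ (r * (m - s))) * starRingEnd ℂ (zeta q ^ (r * t)) := by
    rw [zeta_pow, zeta_pow, zeta_zpow, conj_zeta_pow, conj_zeta_pow]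
    simp only [← Complex.exp_add]
    congr 1
    push_cast [Nat.cast_sub hs.le]
    rw [hpC]
    field_simp
    ring
  have key3 : zeta (q * m) ^ (r * s) * zeta q ^ (r * u) =
      starRingEnd ℂ (zeta (q * m) ^ (r * (m - s))) * starRingEnd ℂ (zeta q ^ (r * t)) *
        starRingEnd ℂ (zeta (2 * q) ^ (-(r * p : ℤ))) := by
    rw [zeta_pow, zeta_pow, conj_zeta_zpow, conj_zeta_pow, conj_zeta_pow]
    simp only [← Complex.exp_add]
    congr 1
    push_cast [Nat.cast_sub hs.le]
    rw [hpC]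
    field_simp
    ring
  linear_combination key3 * f ((u * m + s : ℕ) : ℤ) +
    key2 * starRingEnd ℂ (f ((p : ℤ) * m / 2 - (u : ℤ) * m - (s : ℤ)))
end

section
/- Inner-loop forward decomposition: let m, p, n be positive integers and q = np; let f : Fin (pm) → ℂ (zero-padded to length qm). Writing each residue r ∈ {0,...,q-1} as r = un + v with u ∈ {0,...,p-1}, v ∈ {0,...,n-1}, the padded DFT satisfies F_{qℓ+un+v} = ∑_{s=0}^{m-1} ζ_m^{ℓs} ζ_{qm}^{(un+v)s} ∑_{t=0}^{p-1} ζ_p^{ut} ( ζ_q^{vt} f_{tm+s} ), so for each fixed v and s the inner sum over t is a DFT of size p in u of the twisted data ζ_q^{vt} f_{tm+s}. -/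
open Finset Complex

lemma zeta_pow_mul (a b : ℕ) (ha : 0 < a) (hb : 0 < b) : zeta (a * b) ^ a = zeta b := by
  unfold zeta
  rw [← Complex.exp_nat_mul]
  congr 1
  have ha' : (a:ℂ) ≠ 0 := Nat.cast_ne_zero.mpr ha.ne'
  have hb' : (b:ℂ) ≠ 0 := Nat.cast_ne_zero.mpr hb.ne'
  push_cast
  field_simp

lemma zeta_pow_self (N : ℕ) (hN : 0 < N) : zeta N ^ N = 1 := by
  have hN' : (N:ℂ) ≠ 0 := Nat.cast_ne_zero.mpr hN.ne'
  have h : ((N:ℂ)) * (2 * Real.pi * Complex.I / N) = 2 * Real.pi * Complex.I := by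
    field_simp
  rw [zeta, ← Complex.exp_nat_mul, h, Complex.exp_two_pi_mul_I]

/-- Inner-loop forward decomposition: with `q = n*p` and `f : {0,…,pm-1} → ℂ`
zero-padded to length `qm`, writing `r = un + v`, the padded DFT satisfies
`F_{qℓ+un+v} = ∑_{s<m} ζ_m^{ℓs} ζ_{qm}^{(un+v)s} ∑_{t<p} ζ_p^{ut} (ζ_q^{vt} f_{tm+s})`. -/
theorem stmt10 (m p n q : ℕ) (hm : 0 < m) (hp : 0 < p) (hn : 0 < n) (hq : q = n * p)
    (f : ℕ → ℂ)
    (ℓ u v : ℕ) (hℓ : ℓ < m) (hu : u < p) (hv : v < n) :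
    ∑ j ∈ Finset.range (p * m), zeta (q * m) ^ ((q * ℓ + u * n + v) * j) * f j =
      ∑ s ∈ Finset.range m, zeta m ^ (ℓ * s) * zeta (q * m) ^ ((u * n + v) * s) *
        ∑ t ∈ Finset.range p, zeta p ^ (u * t) * (zeta q ^ (v * t) * f (t * m + s)) := by
  have hq0 : 0 < q := hq ▸ Nat.mul_pos hn hp
  have hqm : zeta (q * m) ^ (q * m) = 1 := zeta_pow_self _ (Nat.mul_pos hq0 hm)
  have hzm : zeta (q * m) ^ q = zeta m := zeta_pow_mul q m hq0 hm
  have hzq : zeta (q * m) ^ m = zeta q := by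
    rw [mul_comm q m]; exact zeta_pow_mul m q hm hq0
  have hzp : zeta q ^ n = zeta p := by
    rw [hq]; exact zeta_pow_mul n p hn hp
  have hre : ∑ j ∈ Finset.range (p * m),
      zeta (q * m) ^ ((q * ℓ + u * n + v) * j) * f j
      = ∑ x ∈ Finset.range p ×ˢ Finset.range m,
        zeta (q * m) ^ ((q * ℓ + u * n + v) * (x.1 * m + x.2)) * f (x.1 * m + x.2) := by
    refine Finset.sum_nbij' (fun j => (j / m, j % m)) (fun x => x.1 * m + x.2)
      ?_ ?_ ?_ ?_ ?_
    · intro j hj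
      simp only [Finset.mem_product, Finset.mem_range] at *
      exact ⟨Nat.div_lt_of_lt_mul (by rwa [mul_comm] at hj), Nat.mod_lt _ hm⟩
    · intro x hx
      simp only [Finset.mem_product, Finset.mem_range] at *
      have : x.1 + 1 ≤ p := hx.1
      calc x.1 * m + x.2 < (x.1 + 1) * m := by
            have := hx.2; nlinarith
        _ ≤ p * m := Nat.mul_le_mul_right m this
    · intro j hj
      simpa using Nat.div_add_mod' j m
    · intro x hx
      simp only [Finset.mem_product, Finset.mem_range] at hx
      have h1 : (x.1 * m + x.2) / m = x.1 := by
        rw [mul_comm, Nat.mul_add_div hm, Nat.div_eq_of_lt hx.2, add_zero]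
      have h2 : (x.1 * m + x.2) % m = x.2 := by
        rw [mul_comm, Nat.mul_add_mod, Nat.mod_eq_of_lt hx.2]
      exact Prod.ext h1 h2
    · intro j hj
      simp only [Nat.div_add_mod']
  rw [hre, Finset.sum_product, Finset.sum_comm]
  refine Finset.sum_congr rfl fun s hs => ?_
  rw [Finset.mul_sum]
  refine Finset.sum_congr rfl fun t ht => ?_
  have hexp : (q * ℓ + u * n + v) * (t * m + s)
      = q * m * (ℓ * t) + (q * (ℓ * s) + (m * (n * (u * t)) + (m * (v * t)
        + (u * n + v) * s))) := by ring
  rw [hexp, pow_add, pow_add, pow_add, pow_add,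
    pow_mul (zeta (q*m)) (q*m) (ℓ*t), hqm, one_pow,
    pow_mul (zeta (q*m)) q (ℓ*s), hzm,
    pow_mul (zeta (q*m)) m (n*(u*t)), hzq,
    pow_mul (zeta q) n (u*t), hzp,
    pow_mul (zeta (q*m)) m (v*t), hzq]
  simp only []
  ring
end

section
/- Inner-loop inverse decomposition: with m, p, n positive, q = np, and F : Fin (qm) → ℂ the padded DFT of f : Fin (pm) → ℂ, one has f_{tm+s} = (1/(qm)) ∑_{v=0}^{n-1} ζ_{np}^{-tv} ∑_{u=0}^{p-1} ζ_p^{-tu} ζ_{qm}^{-s(un+v)} ∑_{ℓ=0}^{m-1} ζ_m^{-sℓ} F_{qℓ+un+v} for all t ∈ {0,...,p-1}, s ∈ {0,...,m-1}. -/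
open Finset Complex

lemma sum_range_mul' (a b : ℕ) (g : ℕ → ℂ) :
    ∑ k ∈ Finset.range (a * b), g k
      = ∑ i ∈ Finset.range b, ∑ j ∈ Finset.range a, g (a * i + j) := by
  induction b with
  | zero => simp
  | succ b ih =>
      rw [Finset.sum_range_succ, ← ih, Nat.mul_succ, Finset.range_eq_Ico,
        ← Finset.sum_Ico_consecutive g (Nat.zero_le (a*b)) (Nat.le_add_right (a*b) a),
        ← Finset.range_eq_Ico, Finset.sum_Ico_eq_sum_range]
      simp [add_comm]

lemma sum_comm3 (A B C : Finset ℕ) (h : ℕ → ℕ → ℕ → ℂ) :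
    ∑ v ∈ A, ∑ u ∈ B, ∑ ℓ ∈ C, h v u ℓ = ∑ ℓ ∈ C, ∑ u ∈ B, ∑ v ∈ A, h v u ℓ := by
  rw [Finset.sum_comm]
  refine (Finset.sum_congr rfl fun u _ => Finset.sum_comm).trans ?_
  rw [Finset.sum_comm]

lemma zpow_combine (ζ X : ℂ) (h : ζ ≠ 0) (a b c d : ℤ) :
    ζ^a * (ζ^b * ζ^c * (ζ^d * X)) = ζ^(a+b+c+d) * X := by
  rw [zpow_add₀ h, zpow_add₀ h, zpow_add₀ h]; ring

lemma zeta_pow_eq (a b : ℕ) (ha : 0 < a) (hb : 0 < b) :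
    zeta (a * b) ^ b = zeta a := by
  unfold zeta
  rw [← Complex.exp_nat_mul]
  congr 1
  have ha' : (a:ℂ) ≠ 0 := Nat.cast_ne_zero.mpr ha.ne'
  have hb' : (b:ℂ) ≠ 0 := Nat.cast_ne_zero.mpr hb.ne'
  push_cast
  field_simp


/-- Inner-loop inverse decomposition: with `q = n*p` and `F` the padded DFT of `f`,
`f_{tm+s} = (1/(qm)) ∑_{v<n} ζ_{np}^{-tv} ∑_{u<p} ζ_p^{-tu} ζ_{qm}^{-s(un+v)}
∑_{ℓ<m} ζ_m^{-sℓ} F_{qℓ+un+v}` for `t < p`, `s < m`. -/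
theorem stmt11 (m p n q : ℕ) (hm : 0 < m) (hp : 0 < p) (hn : 0 < n) (hq : q = n * p)
    (f : ℕ → ℂ) (F : ℕ → ℂ)
    (hF : ∀ k, F k = ∑ j ∈ Finset.range (p * m), zeta (q * m) ^ (k * j) * f j)
    (t s : ℕ) (ht : t < p) (hs : s < m) :
    f (t * m + s) = (1 / (q * m : ℂ)) *
      ∑ v ∈ Finset.range n, zeta (n * p) ^ (-(t * v : ℤ)) *
        ∑ u ∈ Finset.range p, zeta p ^ (-(t * u : ℤ)) *
          zeta (q * m) ^ (-(s * (u * n + v) : ℤ)) *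
          ∑ ℓ ∈ Finset.range m, zeta m ^ (-(s * ℓ : ℤ)) * F (q * ℓ + u * n + v) := by
  have hq0 : 0 < q := hq ▸ Nat.mul_pos hn hp
  set N := q * m with hN
  have hN0 : 0 < N := Nat.mul_pos hq0 hm
  set ζ := zeta N with hζdef
  set T := t * m + s with hT
  have hζ0 : ζ ≠ 0 := Complex.exp_ne_zero _
  have hNC : (N : ℂ) ≠ 0 := Nat.cast_ne_zero.mpr hN0.ne'
  have hprim : IsPrimitiveRoot ζ N := by
    have := Complex.isPrimitiveRoot_exp N hN0.ne'
    simpa [hζdef, zeta] using this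
  have hζN : ζ ^ N = 1 := hprim.pow_eq_one
  have hznp : zeta (n * p) = ζ ^ m := by
    rw [hζdef, hN, hq, zeta_pow_eq (n*p) m (Nat.mul_pos hn hp) hm]
  have hzp : zeta p = ζ ^ (n * m) := by
    have h2 : q * m = p * (n * m) := by rw [hq]; ring
    rw [hζdef, hN, h2, zeta_pow_eq p (n*m) hp (Nat.mul_pos hn hm)]
  have hzm : zeta m = ζ ^ q := by
    have h2 : q * m = m * q := Nat.mul_comm q m
    rw [hζdef, hN, h2, zeta_pow_eq m q hm hq0]
  have hzqm : zeta (q * m) = ζ := rfl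
  have hT_lt : T < p * m := by
    calc T = t * m + s := rfl
    _ < t * m + m := Nat.add_lt_add_left hs _
    _ = (t + 1) * m := by ring
    _ ≤ p * m := Nat.mul_le_mul_right m ht
  have hpmN : p * m ≤ N := by
    rw [hN, hq, Nat.mul_assoc]
    exact Nat.le_mul_of_pos_left _ hn
  have hzN : ∀ z : ℤ, ζ ^ ((N : ℤ) * z) = 1 := by
    intro z
    rw [zpow_mul, zpow_natCast, hζN, one_zpow]
  set g : ℕ → ℂ := fun k => ζ ^ (-(T * k : ℤ)) * F k with hg
  -- step 1
  have step1 :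
      (∑ v ∈ Finset.range n, zeta (n * p) ^ (-(t * v : ℤ)) *
        ∑ u ∈ Finset.range p, zeta p ^ (-(t * u : ℤ)) *
          zeta (q * m) ^ (-(s * (u * n + v) : ℤ)) *
          ∑ ℓ ∈ Finset.range m, zeta m ^ (-(s * ℓ : ℤ)) * F (q * ℓ + u * n + v))
      = ∑ k ∈ Finset.range N, g k := by
    have pointwise :
        (∑ v ∈ Finset.range n, zeta (n * p) ^ (-(t * v : ℤ)) *
          ∑ u ∈ Finset.range p, zeta p ^ (-(t * u : ℤ)) *
            zeta (q * m) ^ (-(s * (u * n + v) : ℤ)) *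
            ∑ ℓ ∈ Finset.range m, zeta m ^ (-(s * ℓ : ℤ)) * F (q * ℓ + u * n + v))
        = ∑ v ∈ Finset.range n, ∑ u ∈ Finset.range p, ∑ ℓ ∈ Finset.range m,
            g (q * ℓ + u * n + v) := by
      refine Finset.sum_congr rfl fun v _ => ?_
      rw [Finset.mul_sum]
      refine Finset.sum_congr rfl fun u _ => ?_
      rw [Finset.mul_sum, Finset.mul_sum]
      refine Finset.sum_congr rfl fun ℓ _ => ?_
      rw [hznp, hzp, hzm, hzqm, hg]
      simp only
      rw [← zpow_natCast ζ m, ← zpow_natCast ζ (n*m), ← zpow_natCast ζ q,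
        ← zpow_mul, ← zpow_mul, ← zpow_mul, zpow_combine ζ _ hζ0]
      congr 1
      have hexp : ((m : ℤ) * (-(t * v : ℤ)) + ((n*m : ℕ) : ℤ) * (-(t * u : ℤ))
          + (-(s * (u*n+v) : ℤ)) + (q : ℤ) * (-(s * ℓ : ℤ)))
          = (-(T * ((q * ℓ + u * n + v : ℕ)) : ℤ)) + (N : ℤ) * ((t * ℓ : ℤ)) := by
        rw [hT, hN]
        push_cast
        ring
      rw [hexp, zpow_add₀ hζ0, hzN, mul_one]
    rw [pointwise, sum_comm3]
    rw [hN, sum_range_mul' q m g]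
    refine Finset.sum_congr rfl fun ℓ _ => ?_
    rw [hq, sum_range_mul' n p]
    refine Finset.sum_congr rfl fun u _ => Finset.sum_congr rfl fun v _ => ?_
    congr 1
    ring
  -- step 2: orthogonality
  have step2 : ∑ k ∈ Finset.range N, g k = (N : ℂ) * f T := by
    simp only [hg, hF]
    have h1 : ∀ k ∈ Finset.range N,
        ζ ^ (-(T * k : ℤ)) * ∑ j ∈ Finset.range (p * m), ζ ^ (k * j) * f j
        = ∑ j ∈ Finset.range (p * m), (ζ ^ ((j : ℤ) - (T : ℤ))) ^ k * f j := by
      intro k _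
      rw [Finset.mul_sum]
      refine Finset.sum_congr rfl fun j _ => ?_
      rw [← mul_assoc]
      congr 1
      rw [← zpow_natCast ζ (k*j), ← zpow_add₀ hζ0, ← zpow_natCast (ζ ^ ((j:ℤ) - T)) k,
        ← zpow_mul]
      congr 1
      push_cast
      ring
    rw [Finset.sum_congr rfl h1, Finset.sum_comm]
    simp only [← Finset.sum_mul]
    have key : ∀ j ∈ Finset.range (p * m),
        (∑ k ∈ Finset.range N, (ζ ^ ((j : ℤ) - (T : ℤ))) ^ k) * f j
        = (if j = T then (N : ℂ) else 0) * f j := by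
      intro j hj
      congr 1
      by_cases hjT : j = T
      · subst hjT
        simp
      · have hw1 : ζ ^ ((j : ℤ) - (T : ℤ)) ≠ 1 := by
          intro h1'
          rw [hprim.zpow_eq_one_iff_dvd] at h1'
          rcases h1' with ⟨c, hc⟩
          have hjN : j < N := lt_of_lt_of_le (Finset.mem_range.mp hj) hpmN
          have hTN : T < N := lt_of_lt_of_le hT_lt hpmN
          have hne : (j : ℤ) - T ≠ 0 := by
            intro h0
            exact hjT (by exact_mod_cast sub_eq_zero.mp h0)
          have hc0 : c ≠ 0 := by rintro rfl; simp at hc; exact hne hc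
          have hge : (N : ℤ) ≤ |(j : ℤ) - T| := by
            rw [hc, abs_mul, abs_of_nonneg (by positivity : (0:ℤ) ≤ (N:ℤ))]
            nlinarith [Int.one_le_abs hc0, (by exact_mod_cast hN0 : (0:ℤ) < (N:ℤ))]
          have habs : |(j : ℤ) - T| < N := by
            rw [abs_lt]
            constructor
            · have : (0:ℤ) ≤ (j:ℤ) := Int.natCast_nonneg j
              have : (T:ℤ) < N := by exact_mod_cast hTN
              omega
            · have : (j:ℤ) < N := by exact_mod_cast hjN
              have : (0:ℤ) ≤ (T:ℤ) := Int.natCast_nonneg T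
              omega
          omega
        rw [geom_sum_eq hw1 N]
        have hwN : (ζ ^ ((j : ℤ) - (T : ℤ))) ^ N = 1 := by
          rw [← zpow_natCast, ← zpow_mul, mul_comm, hzN]
        rw [hwN]
        simp [hjT]
    rw [Finset.sum_congr rfl key]
    simp only [ite_mul, zero_mul]
    rw [Finset.sum_ite_eq' (Finset.range (p*m)) T (fun j => (N:ℂ) * f j)]
    simp [Finset.mem_range.mpr hT_lt]
  rw [step1, step2]
  have hcast : ((q : ℂ) * m) = (N : ℂ) := by rw [hN]; push_cast; ring
  rw [hcast]
  field_simp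
end

section
/- Padded DFT residues as subtransforms: for m, q positive integers, L ≤ m, and f : Fin L → ℂ zero-padded to length qm, the residue contribution F_{qℓ+r} (ℓ ∈ {0,...,m-1}) for fixed r ∈ {0,...,q-1} equals the size-m DFT of the twisted sequence W_s = ζ_{qm}^{rs} f_s (with f_s = 0 for s ≥ L): F_{qℓ+r} = ∑_{s=0}^{m-1} ζ_m^{ℓs} W_s. -/
open Finset Complex

/-- Padded DFT residues as subtransforms (`p = 1` case): for `L ≤ m` and fixed
`r < q`, the residue contribution `F_{qℓ+r}` equals the size-`m` DFT of the
twisted sequence `W_s = ζ_{qm}^{rs} f_s` (with `f_s = 0` for `s ≥ L`). -/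
theorem stmt15 (m q L : ℕ) (hm : 0 < m) (hq : 0 < q) (hL : L ≤ m)
    (f : ℕ → ℂ) (r : ℕ) (hr : r < q)
    (W : ℕ → ℂ)
    (hW : ∀ s, W s = if s < L then zeta (q * m) ^ (r * s) * f s else 0)
    (ℓ : ℕ) (hℓ : ℓ < m) :
    ∑ j ∈ Finset.range L, zeta (q * m) ^ ((q * ℓ + r) * j) * f j =
      ∑ s ∈ Finset.range m, zeta m ^ (ℓ * s) * W s := by
  have hq' : (q:ℂ) ≠ 0 := Nat.cast_ne_zero.mpr hq.ne'
  have hm' : (m:ℂ) ≠ 0 := Nat.cast_ne_zero.mpr hm.ne'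
  have hz : zeta (q*m) ^ q = zeta m := by
    rw [zeta, zeta, ← Complex.exp_nat_mul]
    congr 1
    push_cast
    field_simp
  rw [← Finset.sum_subset (Finset.range_subset_range.mpr hL)
    (fun s _ hsL => by simp [hW, Finset.mem_range.not.mp hsL])]
  refine Finset.sum_congr rfl fun j hj => ?_
  have hjL : j < L := Finset.mem_range.mp hj
  rw [hW, if_pos hjL, ← mul_assoc, ← hz, ← pow_mul, ← pow_add]
  congr 2
  ring
end

section
/- Unitarity scaling of the decomposed transforms: composing the forward decomposed padded DFT (from f : Fin (pm) → ℂ zero-padded to length qm) with the decomposed inverse (summing the q residue contributions h_{r,s,t} and dividing by qm) recovers f exactly: for all t < p, s < m, (1/(qm)) ∑_{r=0}^{q-1} ζ_q^{-tr} ζ_{qm}^{-sr} ∑_{ℓ=0}^{m-1} ζ_m^{-sℓ} ( ∑_{s'=0}^{m-1} ζ_m^{ℓs'} ζ_{qm}^{rs'} ∑_{t'=0}^{p-1} ζ_q^{rt'} f_{t'm+s'} ) = f_{tm+s}. -/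
open Finset Complex

lemma zeta_ne_zero (n : ℕ) : zeta n ≠ 0 := Complex.exp_ne_zero _

lemma zeta_geom (n : ℕ) (hn : 0 < n) (a : ℤ) :
    ∑ i ∈ Finset.range n, zeta n ^ (a * i) = if (n : ℤ) ∣ a then (n : ℂ) else 0 := by
  have hprim : IsPrimitiveRoot (zeta n) n := Complex.isPrimitiveRoot_exp n hn.ne'
  have h1 : ∀ i : ℕ, zeta n ^ (a * i) = (zeta n ^ a) ^ i := fun i => by
    rw [zpow_mul, zpow_natCast]
  simp_rw [h1]
  by_cases hd : (n : ℤ) ∣ a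
  · have h2 : zeta n ^ a = 1 := (hprim.zpow_eq_one_iff_dvd a).mpr hd
    simp [h2, hd]
  · have hne : zeta n ^ a ≠ 1 := fun h => hd ((hprim.zpow_eq_one_iff_dvd a).mp h)
    rw [geom_sum_eq hne]
    have h3 : (zeta n ^ a) ^ n = 1 := by
      rw [← zpow_natCast (zeta n ^ a) n, ← zpow_mul, mul_comm, zpow_mul, zpow_natCast,
        hprim.pow_eq_one, one_zpow]
    simp [h3, hd]

lemma collapse (N p t : ℕ) (hp : p ≤ N) (ht : t < p) (C : ℕ → ℂ) :
    ∑ t' ∈ Finset.range p, (if (N : ℤ) ∣ ((t' : ℤ) - t) then (N : ℂ) else 0) * C t'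
      = N * C t := by
  rw [Finset.sum_eq_single t]
  · simp
  · intro t' ht' hne
    have h1 : ¬ (N : ℤ) ∣ ((t' : ℤ) - t) := by
      intro hd
      have h2 : (t' : ℤ) - t = 0 := by
        apply Int.eq_zero_of_dvd_of_natAbs_lt_natAbs hd
        have h3 : t' < p := Finset.mem_range.mp ht'
        simp only [Int.natAbs_natCast]
        omega
      exact hne (by omega)
    simp [h1]
  · intro h; exact absurd (Finset.mem_range.mpr ht) h

/-- Unitarity of the decomposed transforms: the forward decomposed padded DFT of
`f : {0,…,pm-1} → ℂ` followed by the decomposed inverse (accumulating the `q`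
residues and dividing by `qm`) recovers `f` exactly. -/
theorem stmt17 (m p q : ℕ) (hm : 0 < m) (hp : 0 < p) (hq : 0 < q) (hpq : p ≤ q)
    (f : ℕ → ℂ) (t s : ℕ) (ht : t < p) (hs : s < m) :
    (1 / (q * m : ℂ)) *
      ∑ r ∈ Finset.range q, zeta q ^ (-(t * r : ℤ)) * zeta (q * m) ^ (-(s * r : ℤ)) *
        ∑ ℓ ∈ Finset.range m, zeta m ^ (-(s * ℓ : ℤ)) *
          (∑ s' ∈ Finset.range m, zeta m ^ (ℓ * s') * zeta (q * m) ^ (r * s') *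
            ∑ t' ∈ Finset.range p, zeta q ^ (r * t') * f (t' * m + s')) =
      f (t * m + s) := by
  have step1 : ∀ r : ℕ,
      (∑ ℓ ∈ Finset.range m, zeta m ^ (-(s * ℓ : ℤ)) *
        (∑ s' ∈ Finset.range m, zeta m ^ (ℓ * s') * zeta (q * m) ^ (r * s') *
          ∑ t' ∈ Finset.range p, zeta q ^ (r * t') * f (t' * m + s')))
      = m * (zeta (q * m) ^ (r * s) *
          ∑ t' ∈ Finset.range p, zeta q ^ (r * t') * f (t' * m + s)) := by
    intro r
    set T : ℕ → ℂ := fun s' => ∑ t' ∈ Finset.range p, zeta q ^ (r * t') * f (t' * m + s')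
      with hT
    have h1 : (∑ ℓ ∈ Finset.range m, zeta m ^ (-(s * ℓ : ℤ)) *
        (∑ s' ∈ Finset.range m, zeta m ^ (ℓ * s') * zeta (q * m) ^ (r * s') * T s'))
      = ∑ s' ∈ Finset.range m,
          (∑ ℓ ∈ Finset.range m, zeta m ^ (((s' : ℤ) - s) * ℓ)) *
          (zeta (q * m) ^ (r * s') * T s') := by
      simp_rw [Finset.mul_sum, Finset.sum_mul]
      rw [Finset.sum_comm]
      have h2 : ∀ a b : ℕ, zeta m ^ (((a : ℤ) - s) * b)
          = zeta m ^ (-(s * b : ℤ)) * zeta m ^ (b * a) := by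
        intro a b
        rw [← zpow_natCast (zeta m) (b * a), ← zpow_add₀ (zeta_ne_zero m)]
        congr 1; push_cast; ring
      refine Finset.sum_congr rfl fun ℓ _ => Finset.sum_congr rfl fun s' _ => ?_
      rw [h2 ℓ s']; ring
    rw [h1]
    simp_rw [zeta_geom m hm]
    exact collapse m m s le_rfl hs _
  have step2 : (∑ r ∈ Finset.range q, zeta q ^ (-(t * r : ℤ)) * zeta (q * m) ^ (-(s * r : ℤ)) *
        ∑ ℓ ∈ Finset.range m, zeta m ^ (-(s * ℓ : ℤ)) *
          (∑ s' ∈ Finset.range m, zeta m ^ (ℓ * s') * zeta (q * m) ^ (r * s') *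
            ∑ t' ∈ Finset.range p, zeta q ^ (r * t') * f (t' * m + s')))
      = ∑ r ∈ Finset.range q, ∑ t' ∈ Finset.range p,
          (m : ℂ) * (zeta q ^ (((t' : ℤ) - t) * r) * f (t' * m + s)) := by
    refine Finset.sum_congr rfl fun r _ => ?_
    rw [step1 r]
    rw [Finset.mul_sum, Finset.mul_sum, Finset.mul_sum]
    refine Finset.sum_congr rfl fun t' _ => ?_
    have hcanc : zeta (q * m) ^ (-(s * r : ℤ)) * zeta (q * m) ^ (r * s) = 1 := by
      rw [← zpow_natCast (zeta (q * m)) (r * s), ← zpow_add₀ (zeta_ne_zero (q * m))]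
      have h0 : (-(s * r : ℤ) + ((r * s : ℕ) : ℤ)) = 0 := by push_cast; ring
      rw [h0, zpow_zero]
    have hmerge : zeta q ^ (((t' : ℤ) - t) * r)
        = zeta q ^ (-(t * r : ℤ)) * zeta q ^ (r * t') := by
      rw [← zpow_natCast (zeta q) (r * t'), ← zpow_add₀ (zeta_ne_zero q)]
      congr 1; push_cast; ring
    calc zeta q ^ (-(t * r : ℤ)) * zeta (q * m) ^ (-(s * r : ℤ)) *
          (↑m * (zeta (q * m) ^ (r * s) * (zeta q ^ (r * t') * f (t' * m + s))))
        = ↑m * ((zeta (q * m) ^ (-(s * r : ℤ)) * zeta (q * m) ^ (r * s)) *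
            (zeta q ^ (-(t * r : ℤ)) * zeta q ^ (r * t') * f (t' * m + s))) := by ring
      _ = ↑m * (zeta q ^ (((t' : ℤ) - t) * r) * f (t' * m + s)) := by
          rw [hcanc, hmerge]; ring
  rw [step2, Finset.sum_comm]
  have step3 : (∑ t' ∈ Finset.range p, ∑ r ∈ Finset.range q,
        (m : ℂ) * (zeta q ^ (((t' : ℤ) - t) * r) * f (t' * m + s)))
      = (m : ℂ) * ∑ t' ∈ Finset.range p,
          (if (q : ℤ) ∣ ((t' : ℤ) - t) then (q : ℂ) else 0) * f (t' * m + s) := by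
    rw [Finset.mul_sum]
    refine Finset.sum_congr rfl fun t' _ => ?_
    rw [← zeta_geom q hq ((t' : ℤ) - t)]
    conv_rhs => rw [Finset.sum_mul, Finset.mul_sum]
  rw [step3, collapse q p t hpq ht]
  have hq' : (q : ℂ) ≠ 0 := Nat.cast_ne_zero.mpr hq.ne'
  have hm' : (m : ℂ) ≠ 0 := Nat.cast_ne_zero.mpr hm.ne'
  field_simp
end
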